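/- (Theorem 1) In the setup below, assume f is weakly homogeneous of degree d ∈ (0,1] and tolerance η ≥ 1 over [0,1], i.e. (1/η)·θ·f(x) ≤ f(θ·x) ≤ θ^d·f(x) for all x ∈ ℝ₊ⁿ and θ ∈ [0,1]. Then for every S ⊆ {1,…,n} with |S| ≤ k: u(S) ≥ (1/2)·(1−ε)^{k−1}·(1−Δ/ε)·v(S) and u(S) ≤ 2η·(1 + a^d·k/(ε−Δ)) / ((1−ε)^k·(1−Δ/ε)) · v(S). -/

import Mathlib

open MeasureTheory ProbabilityTheory

/-- For a subset `S` of coordinates, `mask S x` is the vector agreeing with `x` on `S`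
and equal to `0` outside `S`. -/
def mask {n : ℕ} (S : Finset (Fin n)) (x : Fin n → ℝ) : Fin n → ℝ :=
  fun i => if i ∈ S then x i else 0

/-!
Write `U, V, Û, Ũ` for `𝔼 f` of the masked vectors `X_S, Y_S, X̂_S, X̃_S`, and
`Φ = ∑_{i ∈ S} 𝔼[f(X_i e_i); X_i > τ_i] = ∑_{i ∈ S} H_i ℙ(X_i > τ_i)`.

Subadditivity lets one peel off, at a cost of `f(x_i e_i)` each, the coordinates in which two
vectors differ: hence `Ũ ≤ U + Φ`, `U ≤ Û + Φ`, and `Û ≤ Ũ + ∑_{i ∈ S} a^d H_i`, since a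
coordinate dropped below `a τ_i` costs at most `a^d f(c_i e_i) = a^d H_i` by homogeneity.
Independence gives the converse: on the event that `i` is the only coordinate of `S` above its
threshold, `f(X_S) ≥ f(X_i e_i)` and `f(X̃_S) ≥ H_i`, and this event has probability at least
`(1-ε)^{|S|-1} ℙ(X_i > τ_i)`; so `(1-ε)^{k-1} Φ` is at most both `U` and `Ũ`, and likewise
`(ε-Δ) H_i ≤ Ũ`. Finally `(1-ε) X̃ ≤ Y` and weak homogeneity give `(1-ε) Ũ ≤ η V`.
-/

theorem Finset.sum_indicator_le_of_pairwiseDisjoint {ι Ω : Type*} {S : Finset ι}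
    {C : ι → Set Ω} (hC : (S : Set ι).PairwiseDisjoint C) {φ : ι → Ω → ℝ} {F : Ω → ℝ}
    (hF0 : 0 ≤ F) (hφF : ∀ i ∈ S, ∀ ω ∈ C i, φ i ω ≤ F ω) (ω : Ω) :
    ∑ i ∈ S, (C i).indicator (φ i) ω ≤ F ω := by
  by_cases h : ∃ i ∈ S, ω ∈ C i
  · obtain ⟨i, hi, hωi⟩ := h
    rw [Finset.sum_eq_single_of_mem i hi fun j hj hji => Set.indicator_of_notMem
      (fun hωj => Set.disjoint_left.mp (hC hj hi hji) hωj hωi) _, Set.indicator_of_mem hωi]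
    exact hφF i hi ω hωi
  · push Not at h
    rw [Finset.sum_eq_zero fun i hi => Set.indicator_of_notMem (h i hi) _]
    exact hF0 ω

section Mask

variable {n : ℕ} {S : Finset (Fin n)} {x y : Fin n → ℝ}

theorem mask_nonneg (hx : 0 ≤ x) : 0 ≤ mask S x := fun i => by
  unfold mask; split_ifs; exacts [hx i, le_rfl]

theorem mask_mono (hxy : x ≤ y) : mask S x ≤ mask S y := fun i => by
  unfold mask; split_ifs; exacts [hxy i, le_rfl]

theorem mask_smul (c : ℝ) : mask S (c • x) = c • mask S x := funext fun i => by
  simp only [mask, Pi.smul_apply, smul_eq_mul]; split_ifs <;> simp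

theorem single_le_mask (hx : 0 ≤ x) {i : Fin n} (hi : i ∈ S) : Pi.single i (x i) ≤ mask S x :=
  fun j => by
    rcases eq_or_ne j i with rfl | hj
    · simp [mask, hi]
    · simpa [hj] using mask_nonneg hx j

theorem mask_empty : mask ∅ x = 0 := funext fun i => by simp [mask]

theorem mask_insert {i : Fin n} {T : Finset (Fin n)} (hi : i ∉ T) :
    mask (insert i T) x = Pi.single i (x i) + mask T x := funext fun j => by
  rcases eq_or_ne j i with rfl | hj
  · simp [mask, hi]
  · simp [mask, hj]

theorem measurable_mask (S : Finset (Fin n)) : Measurable (mask S) :=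
  measurable_pi_lambda _ fun i => by
    unfold mask; split_ifs; exacts [measurable_pi_apply i, measurable_const]

end Mask

/-- `map_zero` does not follow from the other fields; weak homogeneity supplies it
(`IsWeaklyHomogeneous.map_zero`). -/
structure IsMonotoneSubadditive {n : ℕ} (f : (Fin n → ℝ) → ℝ) : Prop where
  nonneg : ∀ x, 0 ≤ x → 0 ≤ f x
  mono : ∀ x y, 0 ≤ x → x ≤ y → f x ≤ f y
  subadd : ∀ x y, 0 ≤ x → 0 ≤ y → f (x + y) ≤ f x + f y
  map_zero : f 0 = 0

def IsWeaklyHomogeneous {n : ℕ} (f : (Fin n → ℝ) → ℝ) (d η : ℝ) : Prop :=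
  ∀ (x : Fin n → ℝ) (θ : ℝ), 0 ≤ x → θ ∈ Set.Icc (0 : ℝ) 1 →
    (1 / η) * θ * f x ≤ f (θ • x) ∧ f (θ • x) ≤ θ ^ d * f x

namespace IsMonotoneSubadditive

variable {n : ℕ} {f : (Fin n → ℝ) → ℝ}

theorem apply_mask_le_sum_single (hf : IsMonotoneSubadditive f) {x : Fin n → ℝ} (hx : 0 ≤ x)
    (S : Finset (Fin n)) : f (mask S x) ≤ ∑ i ∈ S, f (Pi.single i (x i)) := by
  induction S using Finset.induction_on with
  | empty => simp [mask_empty, hf.map_zero]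
  | insert i T hi ih =>
    rw [mask_insert hi, Finset.sum_insert hi]
    exact (hf.subadd _ _ (Pi.single_nonneg.mpr (hx i)) (mask_nonneg hx)).trans (by linarith)

theorem apply_mask_le_add_sum_filter (hf : IsMonotoneSubadditive f) {x x' : Fin n → ℝ}
    (hx : 0 ≤ x) (hx' : 0 ≤ x') {S : Finset (Fin n)} {p : Fin n → Prop} [DecidablePred p]
    {b : Fin n → ℝ} (h_off : ∀ i ∈ S, ¬p i → x' i ≤ x i)
    (h_on : ∀ i ∈ S, p i → f (Pi.single i (x' i)) ≤ b i) :
    f (mask S x') ≤ f (mask S x) + ∑ i ∈ S with p i, b i := by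
  have hle : mask S x' ≤ mask S x + mask {i ∈ S | p i} x' := fun i => by
    simp only [mask, Pi.add_apply, Finset.mem_filter]
    by_cases hi : i ∈ S
    · by_cases hp : p i
      · simpa [hi, hp] using hx i
      · simp [hi, hp, h_off i hi hp]
    · simp [hi]
  calc f (mask S x') ≤ f (mask S x + mask {i ∈ S | p i} x') := hf.mono _ _ (mask_nonneg hx') hle
    _ ≤ f (mask S x) + f (mask {i ∈ S | p i} x') :=
      hf.subadd _ _ (mask_nonneg hx) (mask_nonneg hx')
    _ ≤ f (mask S x) + ∑ i ∈ S with p i, b i := by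
      grw [hf.apply_mask_le_sum_single hx']
      gcongr with i hi
      exact h_on i (Finset.mem_filter.1 hi).1 (Finset.mem_filter.1 hi).2

end IsMonotoneSubadditive

namespace IsWeaklyHomogeneous

variable {n : ℕ} {f : (Fin n → ℝ) → ℝ} {d η : ℝ}

theorem map_zero (hhom : IsWeaklyHomogeneous f d η) (hd : 0 < d) (hf0 : 0 ≤ f 0) : f 0 = 0 :=
  le_antisymm
    (by simpa [Real.zero_rpow hd.ne'] using (hhom 0 0 le_rfl ⟨le_rfl, zero_le_one⟩).2) hf0

theorem apply_le_rpow_mul (hhom : IsWeaklyHomogeneous f d η) (hf : IsMonotoneSubadditive f)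
    {x y : Fin n → ℝ} (hx : 0 ≤ x) (hy : 0 ≤ y) {a : ℝ} (ha : a ∈ Set.Icc (0 : ℝ) 1)
    (hxy : x ≤ a • y) : f x ≤ a ^ d * f y :=
  (hf.mono _ _ hx hxy).trans (hhom y a hy ha).2

theorem mul_le_mul_apply (hhom : IsWeaklyHomogeneous f d η) (hf : IsMonotoneSubadditive f)
    (hη : 0 < η) {x y : Fin n → ℝ} (hx : 0 ≤ x) {θ : ℝ} (hθ : θ ∈ Set.Icc (0 : ℝ) 1)
    (hxy : θ • x ≤ y) : θ * f x ≤ η * f y := by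
  have h := (hhom x θ hx hθ).1.trans (hf.mono _ _ (smul_nonneg hθ.1 hx) hxy)
  rw [mul_assoc, div_mul_eq_mul_div, one_mul, div_le_iff₀ hη] at h
  linarith

end IsWeaklyHomogeneous

section Integration

variable {Ω : Type*} [MeasurableSpace Ω] {μ : Measure Ω}

theorem integral_le_add_sum_setIntegral {ι : Type*} {F G : Ω → ℝ} {S : Finset ι}
    {E : ι → Set Ω} {g : ι → Ω → ℝ} (hF : AEStronglyMeasurable F μ) (hF0 : 0 ≤ F)
    (hG : Integrable G μ) (hE : ∀ i, MeasurableSet (E i))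
    (hg : ∀ i ∈ S, IntegrableOn (g i) (E i) μ)
    (hle : ∀ ω, F ω ≤ G ω + ∑ i ∈ S, (E i).indicator (g i) ω) :
    Integrable F μ ∧ ∫ ω, F ω ∂μ ≤ ∫ ω, G ω ∂μ + ∑ i ∈ S, ∫ ω in E i, g i ω ∂μ := by
  have hsum : Integrable (fun ω => ∑ i ∈ S, (E i).indicator (g i) ω) μ :=
    integrable_finsetSum _ fun i hi => (hg i hi).integrable_indicator (hE i)
  have hFint : Integrable F μ := (hG.add hsum).mono' hF <| ae_of_all _ fun ω => by
    simpa [Real.norm_of_nonneg (hF0 ω)] using hle ω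
  refine ⟨hFint, (integral_mono hFint (hG.add hsum) hle).trans_eq ?_⟩
  rw [Pi.add_def, integral_add hG hsum,
    integral_finsetSum _ fun i hi => (hg i hi).integrable_indicator (hE i)]
  simp only [integral_indicator (hE _)]

theorem measureReal_lt_eq_one_sub [IsProbabilityMeasure μ] {Z : Ω → ℝ} (hZ : Measurable Z)
    (t : ℝ) : μ.real {ω | t < Z ω} = 1 - μ.real {ω | Z ω ≤ t} := by
  rw [← probReal_compl_eq_one_sub (measurableSet_le hZ measurable_const)]
  congr 1; ext; simp

theorem mul_le_integral_of_le_on [IsFiniteMeasure μ] {F : Ω → ℝ} {E : Set Ω} {b p : ℝ}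
    (hF : Integrable F μ) (hF0 : 0 ≤ F) (hE : MeasurableSet E) (hp : p ≤ μ.real E) (hb : 0 ≤ b)
    (hbF : ∀ ω ∈ E, b ≤ F ω) : p * b ≤ ∫ ω, F ω ∂μ :=
  calc p * b ≤ ∫ _ in E, b ∂μ := by
        rw [setIntegral_const, smul_eq_mul]; exact mul_le_mul_of_nonneg_right hp hb
    _ ≤ ∫ ω in E, F ω ∂μ := setIntegral_mono_on integrableOn_const hF.integrableOn hE hbF
    _ ≤ ∫ ω, F ω ∂μ := setIntegral_le_integral hF (ae_of_all _ hF0)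

theorem sum_setIntegral_const_mul_le [IsProbabilityMeasure μ] {ι : Type*} {S : Finset ι}
    {E : ι → Set Ω} {h : ι → ℝ} {c p B : ℝ} {k : ℕ} (hS : S.card ≤ k) (hc : 0 ≤ c)
    (hp : 0 < p) (hB0 : 0 ≤ B) (hh0 : ∀ i ∈ S, 0 ≤ h i) (hh : ∀ i ∈ S, p * h i ≤ B) :
    ∑ i ∈ S, ∫ _ in E i, c * h i ∂μ ≤ c * k / p * B := by
  have hB : ∀ i ∈ S, h i ≤ B / p := fun i hi => by rw [le_div_iff₀ hp, mul_comm]; exact hh i hi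
  calc ∑ i ∈ S, ∫ _ in E i, c * h i ∂μ ≤ ∑ _i ∈ S, c * (B / p) := by
        refine Finset.sum_le_sum fun i hi => ?_
        rw [setIntegral_const, smul_eq_mul]
        exact (mul_le_of_le_one_left (mul_nonneg hc (hh0 i hi)) measureReal_le_one).trans
          (mul_le_mul_of_nonneg_left (hB i hi) hc)
    _ ≤ k * (c * (B / p)) := by
        rw [Finset.sum_const, nsmul_eq_mul]
        gcongr
    _ = c * k / p * B := by ring

end Integration

namespace IsMonotoneSubadditive

variable {n : ℕ} {f : (Fin n → ℝ) → ℝ} {Ω : Type*} [MeasurableSpace Ω] {μ : Measure Ω}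

theorem integral_apply_mask_le_add_sum (hf : IsMonotoneSubadditive f) (hfm : Measurable f)
    {Z Z' : Fin n → Ω → ℝ} (hZ0 : ∀ i ω, 0 ≤ Z i ω) (hZ'0 : ∀ i ω, 0 ≤ Z' i ω)
    (hZ' : ∀ i, Measurable (Z' i)) {S : Finset (Fin n)} {E : Fin n → Set Ω}
    (hE : ∀ i, MeasurableSet (E i)) {g : Fin n → Ω → ℝ}
    (h_off : ∀ i ∈ S, ∀ ω ∉ E i, Z' i ω ≤ Z i ω)
    (h_on : ∀ i ∈ S, ∀ ω ∈ E i, f (Pi.single i (Z' i ω)) ≤ g i ω)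
    (hZ : Integrable (fun ω => f (mask S fun i => Z i ω)) μ)
    (hg : ∀ i ∈ S, IntegrableOn (g i) (E i) μ) :
    Integrable (fun ω => f (mask S fun i => Z' i ω)) μ ∧
      ∫ ω, f (mask S fun i => Z' i ω) ∂μ
        ≤ ∫ ω, f (mask S fun i => Z i ω) ∂μ + ∑ i ∈ S, ∫ ω in E i, g i ω ∂μ := by
  classical
  refine integral_le_add_sum_setIntegral
    (hfm.comp ((measurable_mask S).comp (measurable_pi_lambda _ hZ'))).aestronglyMeasurable
    (fun ω => hf.nonneg _ (mask_nonneg fun i => hZ'0 i ω)) hZ hE hg fun ω => ?_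
  simp only [Set.indicator_apply, ← Finset.sum_filter]
  exact hf.apply_mask_le_add_sum_filter (fun i => hZ0 i ω) (fun i => hZ'0 i ω)
    (fun i hi hω => h_off i hi ω hω) fun i hi hω => h_on i hi ω hω

end IsMonotoneSubadditive

theorem IsWeaklyHomogeneous.integral_le_of_smul_le_le {n : ℕ} {f : (Fin n → ℝ) → ℝ}
    {d η : ℝ} {Ω : Type*} [MeasurableSpace Ω] {μ : Measure Ω} (hhom : IsWeaklyHomogeneous f d η)
    (hf : IsMonotoneSubadditive f) (hη : 0 < η) {Z Y : Fin n → Ω → ℝ} (hZ0 : ∀ i ω, 0 ≤ Z i ω)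
    {θ : ℝ} (hθ : θ ∈ Set.Icc (0 : ℝ) 1) (hZY : ∀ i ω, θ * Z i ω ≤ Y i ω)
    (hYZ : ∀ i ω, Y i ω ≤ Z i ω) {S : Finset (Fin n)}
    (hZ : Integrable (fun ω => f (mask S fun i => Z i ω)) μ)
    (hY : Integrable (fun ω => f (mask S fun i => Y i ω)) μ) :
    ∫ ω, f (mask S fun i => Y i ω) ∂μ ≤ ∫ ω, f (mask S fun i => Z i ω) ∂μ ∧
      θ * ∫ ω, f (mask S fun i => Z i ω) ∂μ ≤ η * ∫ ω, f (mask S fun i => Y i ω) ∂μ := by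
  have hY0 : ∀ i ω, 0 ≤ Y i ω := fun i ω => (mul_nonneg hθ.1 (hZ0 i ω)).trans (hZY i ω)
  refine ⟨integral_mono hY hZ fun ω =>
    hf.mono _ _ (mask_nonneg fun i => hY0 i ω) (mask_mono fun i => hYZ i ω), ?_⟩
  rw [← integral_const_mul, ← integral_const_mul]
  refine integral_mono (hZ.const_mul _) (hY.const_mul _) fun ω =>
    hhom.mul_le_mul_apply hf hη (mask_nonneg fun i => hZ0 i ω) hθ ?_
  rw [← mask_smul]
  exact mask_mono fun i => hZY i ω

section Independence

variable {Ω ι : Type*} [MeasurableSpace Ω] {μ : Measure Ω}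

theorem ProbabilityTheory.iIndepFun.setIntegral_iInter_preimage {β : Type*} [MeasurableSpace β]
    {X : ι → Ω → β} (hX : ∀ i, Measurable (X i)) (hind : iIndepFun X μ) {i : ι}
    {T : Finset ι} (hi : i ∉ T) {B : ι → Set β} (hB : ∀ j, MeasurableSet (B j)) {g : β → ℝ}
    (hg : Measurable g) :
    ∫ ω in ⋂ j ∈ T, X j ⁻¹' B j, g (X i ω) ∂μ
      = (∏ j ∈ T, μ.real (X j ⁻¹' B j)) * ∫ ω, g (X i ω) ∂μ := by
  set m : ι → MeasurableSpace Ω := fun j => MeasurableSpace.comap (X j) inferInstance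
  have hm : ∀ j, m j ≤ ‹MeasurableSpace Ω› := fun j => (hX j).comap_le
  have hindep : Indep (⨆ j ∈ (T : Set ι), m j) (⨆ j ∈ ({i} : Set ι), m j) μ :=
    indep_iSup_of_disjoint hm hind.iIndep (Set.disjoint_singleton_right.mpr hi)
  rw [show (⨆ j ∈ ({i} : Set ι), m j) = m i by simp] at hindep
  have hA : MeasurableSet[⨆ j ∈ (T : Set ι), m j] (⋂ j ∈ T, X j ⁻¹' B j) :=
    .biInter T.countable_toSet fun j hj =>
      le_iSup₂ (f := fun j (_ : j ∈ (T : Set ι)) => m j) j hj _ ⟨B j, hB j, rfl⟩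
  rw [hindep.setIntegral_eq_smul (iSup₂_le fun j _ => hm j) (hX i).aemeasurable hA
    hg.aestronglyMeasurable, smul_eq_mul, measureReal_def,
    hind.measure_inter_preimage_eq_mul T fun j _ => hB j, ENNReal.toReal_prod]
  rfl

/-- The events `{τ_i < X_i} ∩ {X_j ≤ τ_j for j ∈ S, j ≠ i}` are disjoint, and by independence
each has `φ_i(X_i)`-mass `∏_{j ≠ i} ℙ(X_j ≤ τ_j) · 𝔼[φ_i(X_i); τ_i < X_i]`. -/
theorem pow_mul_sum_setIntegral_le_integral [DecidableEq ι] {X : ι → Ω → ℝ}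
    (hX : ∀ i, Measurable (X i)) (hind : iIndepFun X μ) {τ : ι → ℝ} {q : ℝ} (hq0 : 0 ≤ q)
    (hq1 : q ≤ 1) (hq : ∀ j, q ≤ μ.real {ω | X j ω ≤ τ j}) {S : Finset ι} {m : ℕ}
    (hm : S.card - 1 ≤ m) {φ : ι → ℝ → ℝ} (hφ : ∀ i, Measurable (φ i))
    (hφ0 : ∀ i ω, τ i < X i ω → 0 ≤ φ i (X i ω))
    (hφint : ∀ i ∈ S, IntegrableOn (fun ω => φ i (X i ω)) {ω | τ i < X i ω} μ)
    {F : Ω → ℝ} (hF : Integrable F μ) (hF0 : 0 ≤ F)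
    (hφF : ∀ i ∈ S, ∀ ω, τ i < X i ω → (∀ j ∈ S.erase i, X j ω ≤ τ j) → φ i (X i ω) ≤ F ω) :
    q ^ m * ∑ i ∈ S, ∫ ω in {ω | τ i < X i ω}, φ i (X i ω) ∂μ ≤ ∫ ω, F ω ∂μ := by
  set A : ι → Set Ω := fun i => ⋂ j ∈ S.erase i, X j ⁻¹' Set.Iic (τ j)
  set C : ι → Set Ω := fun i => A i ∩ {ω | τ i < X i ω}
  have hXi : ∀ i, MeasurableSet {ω | τ i < X i ω} := fun i =>
    measurableSet_lt measurable_const (hX i)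
  have hA : ∀ i, MeasurableSet (A i) := fun i =>
    .biInter (S.erase i).countable_toSet fun j _ => measurableSet_Iic.preimage (hX j)
  have hmemC : ∀ {i ω}, ω ∈ C i ↔ (∀ j ∈ S.erase i, X j ω ≤ τ j) ∧ τ i < X i ω := by
    simp [C, A]
  have hCint : ∀ i ∈ S, Integrable ((C i).indicator fun ω => φ i (X i ω)) μ := fun i hi =>
    ((hφint i hi).mono_set Set.inter_subset_right).integrable_indicator ((hA i).inter (hXi i))
  have hterm : ∀ i ∈ S, q ^ m * ∫ ω in {ω | τ i < X i ω}, φ i (X i ω) ∂μ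
      ≤ ∫ ω, (C i).indicator (fun ω => φ i (X i ω)) ω ∂μ := fun i hi => by
    have hψ : {ω | τ i < X i ω}.indicator (fun ω => φ i (X i ω))
        = fun ω => (Set.Ioi (τ i)).indicator (φ i) (X i ω) :=
      funext fun ω => Set.indicator_comp_right (X i)
    have hint : ∫ ω, (Set.Ioi (τ i)).indicator (φ i) (X i ω) ∂μ
        = ∫ ω in {ω | τ i < X i ω}, φ i (X i ω) ∂μ := by
      rw [← integral_indicator (hXi i), hψ]
    rw [← Set.indicator_indicator, integral_indicator (hA i), hψ,
      hind.setIntegral_iInter_preimage hX (S.notMem_erase i) (fun j => measurableSet_Iic)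
        ((hφ i).indicator measurableSet_Ioi), hint]
    refine mul_le_mul_of_nonneg_right ?_ (setIntegral_nonneg (hXi i) fun ω hω => hφ0 i ω hω)
    calc q ^ m ≤ q ^ (S.erase i).card := by
          rw [Finset.card_erase_of_mem hi]; exact pow_le_pow_of_le_one hq0 hq1 hm
      _ ≤ _ := Finset.prod_const q ▸ Finset.prod_le_prod (fun _ _ => hq0) fun j _ => hq j
  have hdisj : (S : Set ι).PairwiseDisjoint C := fun i _ j hj hij =>
    Set.disjoint_left.mpr fun ω hωi hωj =>
      (hmemC.mp hωj).2.not_ge ((hmemC.mp hωi).1 j (Finset.mem_erase.mpr ⟨Ne.symm hij, hj⟩))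
  calc q ^ m * ∑ i ∈ S, ∫ ω in {ω | τ i < X i ω}, φ i (X i ω) ∂μ
      ≤ ∑ i ∈ S, ∫ ω, (C i).indicator (fun ω => φ i (X i ω)) ω ∂μ := by
        rw [Finset.mul_sum]; exact Finset.sum_le_sum hterm
    _ = ∫ ω, ∑ i ∈ S, (C i).indicator (fun ω => φ i (X i ω)) ω ∂μ :=
        (integral_finsetSum _ hCint).symm
    _ ≤ ∫ ω, F ω ∂μ :=
        integral_mono (integrable_finsetSum _ hCint) hF fun ω =>
          Finset.sum_indicator_le_of_pairwiseDisjoint hdisj hF0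
            (fun i hi ω hω => hφF i hi ω (hmemC.mp hω).2 (hmemC.mp hω).1) ω

end Independence

theorem IsMonotoneSubadditive.pow_mul_sum_tail_le_integral {n : ℕ} {f : (Fin n → ℝ) → ℝ}
    {Ω : Type*} [MeasurableSpace Ω] {μ : Measure Ω} (hf : IsMonotoneSubadditive f)
    (hfm : Measurable f) {X : Fin n → Ω → ℝ} (hX : ∀ i, Measurable (X i))
    (hX0 : ∀ i ω, 0 ≤ X i ω) (hind : iIndepFun X μ) {τ : Fin n → ℝ} {q : ℝ} (hq0 : 0 ≤ q)
    (hq1 : q ≤ 1) (hq : ∀ j, q ≤ μ.real {ω | X j ω ≤ τ j}) {S : Finset (Fin n)} {m : ℕ}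
    (hm : S.card - 1 ≤ m) (hsingle : ∀ i ∈ S, Integrable (fun ω => f (Pi.single i (X i ω))) μ)
    (hXS : Integrable (fun ω => f (mask S fun i => X i ω)) μ) :
    q ^ m * ∑ i ∈ S, ∫ ω in {ω | τ i < X i ω}, f (Pi.single i (X i ω)) ∂μ
      ≤ ∫ ω, f (mask S fun i => X i ω) ∂μ :=
  pow_mul_sum_setIntegral_le_integral hX hind hq0 hq1 hq hm (φ := fun i t => f (Pi.single i t))
    (fun i => hfm.comp (continuous_single i).measurable)
    (fun i ω _ => hf.nonneg _ (Pi.single_nonneg.mpr (hX0 i ω)))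
    (fun i hi => (hsingle i hi).integrableOn) hXS
    (fun ω => hf.nonneg _ (mask_nonneg fun i => hX0 i ω))
    fun i hi ω _ _ => hf.mono _ _ (Pi.single_nonneg.mpr (hX0 i ω))
      (single_le_mask (fun j => hX0 j ω) hi)

theorem half_mul_mul_le_of_le_add {U V Φ β γ : ℝ} (hU : 0 ≤ U) (hVU : V ≤ U + Φ)
    (hΦ : β * Φ ≤ U) (hβ0 : 0 ≤ β) (hβ1 : β ≤ 1) (hγ0 : 0 ≤ γ) (hγ1 : γ ≤ 1) :
    1 / 2 * β * γ * V ≤ U := by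
  have hβV : β * V ≤ 2 * U := by nlinarith
  rcases le_total 0 V with hV | hV
  · nlinarith [mul_le_mul_of_nonneg_left hγ1 (mul_nonneg hβ0 hV)]
  · nlinarith [mul_nonneg (mul_nonneg hβ0 hγ0) (neg_nonneg.mpr hV)]

theorem le_div_mul_of_le_add {U W Φ T V C η r γ : ℝ} {k : ℕ} (hk : 1 ≤ k) (hU0 : 0 ≤ U)
    (hT0 : 0 ≤ T) (hC : 0 ≤ C) (hr0 : 0 < r) (hr1 : r ≤ 1) (hγ0 : 0 < γ) (hγ1 : γ ≤ 1)
    (hU : U ≤ W + Φ) (hW : W ≤ (1 + C) * T) (hΦ : r ^ (k - 1) * Φ ≤ T) (hT : r * T ≤ η * V) :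
    U ≤ 2 * η * (1 + C) / (r ^ k * γ) * V := by
  have hβ0 : 0 < r ^ (k - 1) := pow_pos hr0 _
  have hβW : r ^ (k - 1) * W ≤ (1 + C) * T := by
    rcases le_total 0 W with hW0 | hW0
    · nlinarith [mul_le_of_le_one_left hW0 (pow_le_one₀ hr0.le hr1 : r ^ (k - 1) ≤ 1)]
    · nlinarith [mul_nonpos_of_nonneg_of_nonpos hβ0.le hW0]
  have hβU : r ^ (k - 1) * U ≤ 2 * (1 + C) * T := by
    nlinarith [mul_le_mul_of_nonneg_left hU hβ0.le]
  have hrk : r ^ k = r * r ^ (k - 1) := by rw [← pow_succ']; congr 1; omega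
  rw [div_mul_eq_mul_div, le_div_iff₀ (mul_pos (pow_pos hr0 k) hγ0), hrk]
  nlinarith [mul_le_mul_of_nonneg_left hγ1 (mul_nonneg (mul_nonneg hr0.le hβ0.le) hU0)]

structure IsCappedTruncation {n : ℕ} {Ω : Type*} [MeasurableSpace Ω] (X : Fin n → Ω → ℝ)
    (τ c : Fin n → ℝ) (a : ℝ) (Xhat Xtil : Fin n → Ω → ℝ) : Prop where
  measurable : ∀ i, Measurable (X i)
  nonneg : ∀ i ω, 0 ≤ X i ω
  threshold_nonneg : ∀ i, 0 ≤ τ i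
  threshold_lt : ∀ i, τ i < c i
  mem_Icc : a ∈ Set.Icc (0 : ℝ) 1
  hat_eq : ∀ i ω, Xhat i ω = if X i ω ≤ τ i then X i ω else c i
  til_eq : ∀ i ω, Xtil i ω = if a * τ i < Xhat i ω then Xhat i ω else 0

namespace IsCappedTruncation

variable {n : ℕ} {Ω : Type*} [MeasurableSpace Ω] {X Xhat Xtil : Fin n → Ω → ℝ}
  {τ c : Fin n → ℝ} {a : ℝ}

theorem hat_nonneg (h : IsCappedTruncation X τ c a Xhat Xtil) (i : Fin n) (ω : Ω) :
    0 ≤ Xhat i ω := by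
  rw [h.hat_eq]; split_ifs
  exacts [h.nonneg i ω, (h.threshold_nonneg i).trans (h.threshold_lt i).le]

theorem til_nonneg (h : IsCappedTruncation X τ c a Xhat Xtil) (i : Fin n) (ω : Ω) :
    0 ≤ Xtil i ω := by
  rw [h.til_eq]; split_ifs; exacts [h.hat_nonneg i ω, le_rfl]

theorem til_le_hat (h : IsCappedTruncation X τ c a Xhat Xtil) (i : Fin n) (ω : Ω) :
    Xtil i ω ≤ Xhat i ω := by
  rw [h.til_eq]; split_ifs; exacts [le_rfl, h.hat_nonneg i ω]

theorem hat_eq_of_le (h : IsCappedTruncation X τ c a Xhat Xtil) {i : Fin n} {ω : Ω}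
    (hω : X i ω ≤ τ i) : Xhat i ω = X i ω := by
  simp [h.hat_eq, hω]

theorem til_eq_of_lt (h : IsCappedTruncation X τ c a Xhat Xtil) {i : Fin n} {ω : Ω}
    (hω : τ i < X i ω) : Xtil i ω = c i := by
  have hac : a * τ i < c i :=
    (mul_le_of_le_one_left (h.threshold_nonneg i) h.mem_Icc.2).trans_lt (h.threshold_lt i)
  simp [h.til_eq, h.hat_eq, not_le.mpr hω, hac]

theorem measurable_hat (h : IsCappedTruncation X τ c a Xhat Xtil) (i : Fin n) :
    Measurable (Xhat i) := by
  rw [show Xhat i = _ from funext (h.hat_eq i)]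
  exact Measurable.ite (measurableSet_le (h.measurable i) measurable_const) (h.measurable i)
    measurable_const

theorem measurable_til (h : IsCappedTruncation X τ c a Xhat Xtil) (i : Fin n) :
    Measurable (Xtil i) := by
  rw [show Xtil i = _ from funext (h.til_eq i)]
  exact Measurable.ite (measurableSet_lt measurable_const (h.measurable_hat i))
    (h.measurable_hat i) measurable_const

variable {f : (Fin n → ℝ) → ℝ} {μ : Measure Ω} {S : Finset (Fin n)}

theorem apply_single_nonneg (h : IsCappedTruncation X τ c a Xhat Xtil)
    (hf : IsMonotoneSubadditive f) (i : Fin n) : 0 ≤ f (Pi.single i (c i)) :=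
  hf.nonneg _ (Pi.single_nonneg.mpr ((h.threshold_nonneg i).trans (h.threshold_lt i).le))

theorem apply_single_le_apply_mask_til (h : IsCappedTruncation X τ c a Xhat Xtil)
    (hf : IsMonotoneSubadditive f) {i : Fin n} (hi : i ∈ S) {ω : Ω} (hω : τ i < X i ω) :
    f (Pi.single i (c i)) ≤ f (mask S fun j => Xtil j ω) := by
  rw [← h.til_eq_of_lt hω]
  exact hf.mono _ _ (Pi.single_nonneg.mpr (h.til_nonneg i ω))
    (single_le_mask (fun j => h.til_nonneg j ω) hi)

theorem integral_til_le_add [IsFiniteMeasure μ] (h : IsCappedTruncation X τ c a Xhat Xtil)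
    (hf : IsMonotoneSubadditive f) (hfm : Measurable f)
    (hX : Integrable (fun ω => f (mask S fun i => X i ω)) μ) :
    Integrable (fun ω => f (mask S fun i => Xtil i ω)) μ ∧
      ∫ ω, f (mask S fun i => Xtil i ω) ∂μ ≤ ∫ ω, f (mask S fun i => X i ω) ∂μ
        + ∑ i ∈ S, ∫ _ in {ω | τ i < X i ω}, f (Pi.single i (c i)) ∂μ :=
  hf.integral_apply_mask_le_add_sum hfm h.nonneg h.til_nonneg h.measurable_til
    (fun i => measurableSet_lt measurable_const (h.measurable i))
    (fun i _ ω hω => (h.til_le_hat i ω).trans_eq (h.hat_eq_of_le (not_lt.mp hω)))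
    (fun i _ ω hω => (h.til_eq_of_lt hω).symm ▸ le_rfl) hX fun _ _ => integrableOn_const

theorem integral_hat_le_add [IsFiniteMeasure μ] (h : IsCappedTruncation X τ c a Xhat Xtil)
    (hf : IsMonotoneSubadditive f) (hfm : Measurable f) {d η : ℝ}
    (hhom : IsWeaklyHomogeneous f d η)
    (hT : Integrable (fun ω => f (mask S fun i => Xtil i ω)) μ) :
    Integrable (fun ω => f (mask S fun i => Xhat i ω)) μ ∧
      ∫ ω, f (mask S fun i => Xhat i ω) ∂μ ≤ ∫ ω, f (mask S fun i => Xtil i ω) ∂μ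
        + ∑ i ∈ S, ∫ _ in {ω | Xhat i ω ≤ a * τ i}, a ^ d * f (Pi.single i (c i)) ∂μ := by
  refine hf.integral_apply_mask_le_add_sum hfm h.til_nonneg h.hat_nonneg h.measurable_hat
    (fun i => measurableSet_le (h.measurable_hat i) measurable_const)
    (fun i _ ω hω => by simp [h.til_eq, not_le.mp (show ¬Xhat i ω ≤ a * τ i from hω)])
    (fun i _ ω hω => ?_) hT
    fun _ _ => integrableOn_const
  refine hhom.apply_le_rpow_mul hf (Pi.single_nonneg.mpr (h.hat_nonneg i ω))
    (Pi.single_nonneg.mpr ((h.threshold_nonneg i).trans (h.threshold_lt i).le)) h.mem_Icc ?_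
  rw [← Pi.single_smul']
  exact Pi.single_mono i ((show Xhat i ω ≤ a * τ i from hω).trans
    (mul_le_mul_of_nonneg_left (h.threshold_lt i).le h.mem_Icc.1))

theorem integral_le_hat_add (h : IsCappedTruncation X τ c a Xhat Xtil)
    (hf : IsMonotoneSubadditive f) (hfm : Measurable f)
    (hsingle : ∀ i, Integrable (fun ω => f (Pi.single i (X i ω))) μ)
    (hH : Integrable (fun ω => f (mask S fun i => Xhat i ω)) μ) :
    ∫ ω, f (mask S fun i => X i ω) ∂μ ≤ ∫ ω, f (mask S fun i => Xhat i ω) ∂μ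
      + ∑ i ∈ S, ∫ ω in {ω | τ i < X i ω}, f (Pi.single i (X i ω)) ∂μ :=
  (hf.integral_apply_mask_le_add_sum hfm h.hat_nonneg h.nonneg h.measurable
    (fun i => measurableSet_lt measurable_const (h.measurable i))
    (fun _ _ _ hω => (h.hat_eq_of_le (not_lt.mp hω)).ge) (fun _ _ _ _ => le_rfl) hH
    fun i _ => (hsingle i).integrableOn).2

theorem integral_hat_le [IsProbabilityMeasure μ] (h : IsCappedTruncation X τ c a Xhat Xtil)
    (hf : IsMonotoneSubadditive f) (hfm : Measurable f) {d η : ℝ}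
    (hhom : IsWeaklyHomogeneous f d η) {p : ℝ} (hp0 : 0 < p)
    (hp : ∀ i, p ≤ μ.real {ω | τ i < X i ω}) {k : ℕ} (hS : S.card ≤ k)
    (hT : Integrable (fun ω => f (mask S fun i => Xtil i ω)) μ) :
    Integrable (fun ω => f (mask S fun i => Xhat i ω)) μ ∧
      ∫ ω, f (mask S fun i => Xhat i ω) ∂μ
        ≤ (1 + a ^ d * k / p) * ∫ ω, f (mask S fun i => Xtil i ω) ∂μ := by
  obtain ⟨hH, hle⟩ := h.integral_hat_le_add hf hfm hhom hT
  have hT0 : 0 ≤ fun ω => f (mask S fun i => Xtil i ω) := fun ω =>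
    hf.nonneg _ (mask_nonneg fun i => h.til_nonneg i ω)
  have hsum := sum_setIntegral_const_mul_le (μ := μ) (E := fun i => {ω | Xhat i ω ≤ a * τ i}) hS
    (Real.rpow_nonneg h.mem_Icc.1 d) hp0 (integral_nonneg hT0)
    (fun i _ => h.apply_single_nonneg hf i)
    fun i hi => mul_le_integral_of_le_on hT hT0 (measurableSet_lt measurable_const (h.measurable i))
      (hp i) (h.apply_single_nonneg hf i) fun ω hω => h.apply_single_le_apply_mask_til hf hi hω
  exact ⟨hH, by linarith⟩

theorem pow_mul_sum_tail_le_integral_til (h : IsCappedTruncation X τ c a Xhat Xtil)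
    (hf : IsMonotoneSubadditive f) (hind : iIndepFun X μ) {q : ℝ} (hq0 : 0 ≤ q) (hq1 : q ≤ 1)
    (hq : ∀ j, q ≤ μ.real {ω | X j ω ≤ τ j}) {m : ℕ} (hm : S.card - 1 ≤ m)
    (hT : Integrable (fun ω => f (mask S fun i => Xtil i ω)) μ) :
    q ^ m * ∑ i ∈ S, ∫ _ in {ω | τ i < X i ω}, f (Pi.single i (c i)) ∂μ
      ≤ ∫ ω, f (mask S fun i => Xtil i ω) ∂μ :=
  have := hind.isProbabilityMeasure
  pow_mul_sum_setIntegral_le_integral h.measurable hind hq0 hq1 hq hm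
    (φ := fun i _ => f (Pi.single i (c i))) (fun _ => measurable_const)
    (fun i _ _ => h.apply_single_nonneg hf i) (fun _ _ => integrableOn_const) hT
    (fun ω => hf.nonneg _ (mask_nonneg fun i => h.til_nonneg i ω))
    fun _ hi _ hω _ => h.apply_single_le_apply_mask_til hf hi hω

end IsCappedTruncation

theorem sketch_weakly_homogeneous_approx_general
    {Ωs : Type*} [MeasurableSpace Ωs] (μ : Measure Ωs) [IsProbabilityMeasure μ]
    {n : ℕ}
    (X : Fin n → Ωs → ℝ)
    (hX_meas : ∀ i, Measurable (X i))
    (hX_nonneg : ∀ i ω, 0 ≤ X i ω)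
    (hX_indep : iIndepFun X μ)
    (f : (Fin n → ℝ) → ℝ)
    (hf_meas : Measurable f)
    (hf_nonneg : ∀ x : Fin n → ℝ, 0 ≤ x → 0 ≤ f x)
    (hf_mono : ∀ x y : Fin n → ℝ, 0 ≤ x → x ≤ y → f x ≤ f y)
    (hf_subadd : ∀ x y : Fin n → ℝ, 0 ≤ x → 0 ≤ y → f (x + y) ≤ f x + f y)
    (d η : ℝ) (hd : d ∈ Set.Ioc (0 : ℝ) 1) (hη : 1 ≤ η)
    (hf_hom : ∀ (x : Fin n → ℝ) (θ : ℝ), 0 ≤ x → θ ∈ Set.Icc (0 : ℝ) 1 →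
      (1 / η) * θ * f x ≤ f (θ • x) ∧ f (θ • x) ≤ θ ^ d * f x)
    (k : ℕ) (hk : 1 ≤ k)
    (ε Δ : ℝ) (hε : ε ∈ Set.Ioo (0 : ℝ) 1) (hΔ : Δ ∈ Set.Ico (0 : ℝ) ε)
    (τ : Fin n → ℝ) (hτ : ∀ i, 0 ≤ τ i)
    (hquant : ∀ i, 1 - ε ≤ (μ {ω | X i ω ≤ τ i}).toReal ∧
      (μ {ω | X i ω ≤ τ i}).toReal ≤ 1 - ε + Δ)
    (H : Fin n → ℝ)
    (hH : ∀ i, H i = (∫ ω in {ω | τ i < X i ω}, f (Pi.single i (X i ω)) ∂μ) /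
      (μ {ω | τ i < X i ω}).toReal)
    (hH_int : ∀ i, Integrable (fun ω => f (Pi.single i (X i ω))) μ)
    (cst : Fin n → ℝ) (hcst : ∀ i, τ i < cst i)
    (hcstH : ∀ i, f (Pi.single i (cst i)) = H i)
    (Xhat : Fin n → Ωs → ℝ)
    (hXhat : ∀ i ω, Xhat i ω = if X i ω ≤ τ i then X i ω else cst i)
    (a : ℝ) (ha : a ∈ Set.Icc (0 : ℝ) 1)
    (Xtil : Fin n → Ωs → ℝ)
    (hXtil : ∀ i ω, Xtil i ω = if a * τ i < Xhat i ω then Xhat i ω else 0)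
    (Y : Fin n → Ωs → ℝ)
    (hY : ∀ i ω, (1 - ε) * Xtil i ω ≤ Y i ω ∧ Y i ω ≤ Xtil i ω)
    (u v : Finset (Fin n) → ℝ)
    (hu : ∀ S, u S = ∫ ω, f (mask S (fun i => X i ω)) ∂μ)
    (hv : ∀ S, v S = ∫ ω, f (mask S (fun i => Y i ω)) ∂μ)
    (hu_int : ∀ S : Finset (Fin n),
      Integrable (fun ω => f (mask S (fun i => X i ω))) μ)
    (hv_int : ∀ S : Finset (Fin n),
      Integrable (fun ω => f (mask S (fun i => Y i ω))) μ) :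
    ∀ S : Finset (Fin n), S.card ≤ k →
      (1 / 2) * (1 - ε) ^ (k - 1) * (1 - Δ / ε) * v S ≤ u S ∧
      u S ≤ 2 * η * (1 + a ^ d * k / (ε - Δ)) / ((1 - ε) ^ k * (1 - Δ / ε)) * v S := by
  intro S hS
  obtain ⟨hε0, hε1⟩ := hε
  obtain ⟨hΔ0, hΔε⟩ := hΔ
  have hhom : IsWeaklyHomogeneous f d η := hf_hom
  have hf : IsMonotoneSubadditive f :=
    ⟨hf_nonneg, hf_mono, hf_subadd, hhom.map_zero hd.1 (hf_nonneg 0 le_rfl)⟩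
  have hM : IsCappedTruncation X τ cst a Xhat Xtil :=
    ⟨hX_meas, hX_nonneg, hτ, hcst, ha, hXhat, hXtil⟩
  have hp : ∀ i, ε - Δ ≤ μ.real {ω | τ i < X i ω} := fun i => by
    rw [measureReal_lt_eq_one_sub (hX_meas i)]
    linarith [show μ.real {ω | X i ω ≤ τ i} ≤ 1 - ε + Δ from (hquant i).2]
  have hmass : ∀ i, ∫ _ in {ω | τ i < X i ω}, f (Pi.single i (cst i)) ∂μ
      = ∫ ω in {ω | τ i < X i ω}, f (Pi.single i (X i ω)) ∂μ := fun i => by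
    rw [hcstH, hH, div_eq_inv_mul, ← measureReal_def, ← smul_eq_mul, ← setAverage_eq]
    exact setIntegral_setAverage μ _ _
  have hm : S.card - 1 ≤ k - 1 := by omega
  obtain ⟨hFT, hTU⟩ := hM.integral_til_le_add hf hf_meas (hu_int S)
  obtain ⟨hFH, hHT⟩ := hM.integral_hat_le hf hf_meas hhom (by linarith) hp hS hFT
  have hUH := hM.integral_le_hat_add hf hf_meas hH_int hFH
  have hΦU := hf.pow_mul_sum_tail_le_integral hf_meas hX_meas hX_nonneg hX_indep (by linarith)
    (by linarith) (fun j => (hquant j).1) hm (fun i _ => hH_int i) (hu_int S)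
  have hΦT := hM.pow_mul_sum_tail_le_integral_til hf hX_indep (by linarith) (by linarith)
    (fun j => (hquant j).1) hm hFT
  simp only [hmass] at hTU hΦT
  obtain ⟨hVT, hTV⟩ := hhom.integral_le_of_smul_le_le hf (by linarith) hM.til_nonneg
    ⟨by linarith, by linarith⟩ (fun i ω => (hY i ω).1) (fun i ω => (hY i ω).2) hFT (hv_int S)
  have hγ0 : 0 < 1 - Δ / ε := by rw [sub_pos, div_lt_one hε0]; exact hΔε
  have hγ1 : 1 - Δ / ε ≤ 1 := by linarith [div_nonneg hΔ0 hε0.le]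
  have hU0 : 0 ≤ ∫ ω, f (mask S fun i => X i ω) ∂μ :=
    integral_nonneg fun ω => hf.nonneg _ (mask_nonneg fun i => hX_nonneg i ω)
  have hT0 : 0 ≤ ∫ ω, f (mask S fun i => Xtil i ω) ∂μ :=
    integral_nonneg fun ω => hf.nonneg _ (mask_nonneg fun i => hM.til_nonneg i ω)
  rw [hu, hv]
  exact ⟨half_mul_mul_le_of_le_add hU0 (hVT.trans hTU) hΦU (pow_nonneg (by linarith) _)
      (pow_le_one₀ (by linarith) (by linarith)) hγ0.le hγ1,
    le_div_mul_of_le_add hk hU0 hT0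
      (div_nonneg (mul_nonneg (Real.rpow_nonneg ha.1 d) k.cast_nonneg) (by linarith))
      (by linarith) (by linarith) hγ0 hγ1 hUH hHT hΦT hTV⟩

/-- Theorem 1: for a monotone subadditive `f` that is weakly homogeneous of degree
`d ∈ (0,1]` and tolerance `η ≥ 1` over `[0,1]`, the discretization algorithm's sketch
`v(S) = E[f(Y_S)]` satisfies
`(1/2)(1−ε)^{k−1}(1−Δ/ε) v(S) ≤ u(S) ≤ 2η(1 + a^d k/(ε−Δ))/((1−ε)^k (1−Δ/ε)) v(S)`
for all sets `S` with `|S| ≤ k`. -/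
theorem sketch_weakly_homogeneous_approx
    {Ωs : Type*} [MeasurableSpace Ωs] (μ : Measure Ωs) [IsProbabilityMeasure μ]
    {n : ℕ} (hn : 1 ≤ n)
    (X : Fin n → Ωs → ℝ)
    (hX_meas : ∀ i, Measurable (X i))
    (hX_nonneg : ∀ i ω, 0 ≤ X i ω)
    (hX_indep : iIndepFun X μ)
    (f : (Fin n → ℝ) → ℝ)
    (hf_meas : Measurable f)
    (hf_nonneg : ∀ x : Fin n → ℝ, 0 ≤ x → 0 ≤ f x)
    (hf_mono : ∀ x y : Fin n → ℝ, 0 ≤ x → x ≤ y → f x ≤ f y)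
    (hf_subadd : ∀ x y : Fin n → ℝ, 0 ≤ x → 0 ≤ y → f (x + y) ≤ f x + f y)
    (d η : ℝ) (hd : d ∈ Set.Ioc (0 : ℝ) 1) (hη : 1 ≤ η)
    (hf_hom : ∀ (x : Fin n → ℝ) (θ : ℝ), 0 ≤ x → θ ∈ Set.Icc (0 : ℝ) 1 →
      (1 / η) * θ * f x ≤ f (θ • x) ∧ f (θ • x) ≤ θ ^ d * f x)
    (k : ℕ) (hk : 1 ≤ k)
    (ε Δ : ℝ) (hε : ε ∈ Set.Ioo (0 : ℝ) 1) (hΔ : Δ ∈ Set.Ico (0 : ℝ) ε)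
    (τ : Fin n → ℝ) (hτ : ∀ i, 0 ≤ τ i)
    (hquant : ∀ i, 1 - ε ≤ (μ {ω | X i ω ≤ τ i}).toReal ∧
      (μ {ω | X i ω ≤ τ i}).toReal ≤ 1 - ε + Δ)
    (H : Fin n → ℝ)
    (hH : ∀ i, H i = (∫ ω in {ω | τ i < X i ω}, f (Pi.single i (X i ω)) ∂μ) /
      (μ {ω | τ i < X i ω}).toReal)
    (hH_int : ∀ i, Integrable (fun ω => f (Pi.single i (X i ω))) μ)
    (cst : Fin n → ℝ) (hcst : ∀ i, τ i < cst i)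
    (hcstH : ∀ i, f (Pi.single i (cst i)) = H i)
    (Xhat : Fin n → Ωs → ℝ)
    (hXhat : ∀ i ω, Xhat i ω = if X i ω ≤ τ i then X i ω else cst i)
    (a : ℝ) (ha : a ∈ Set.Icc (0 : ℝ) 1)
    (Xtil : Fin n → Ωs → ℝ)
    (hXtil : ∀ i ω, Xtil i ω = if a * τ i < Xhat i ω then Xhat i ω else 0)
    (Y : Fin n → Ωs → ℝ)
    (hY : ∀ i ω, (1 - ε) * Xtil i ω ≤ Y i ω ∧ Y i ω ≤ Xtil i ω)
    (u v : Finset (Fin n) → ℝ)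
    (hu : ∀ S, u S = ∫ ω, f (mask S (fun i => X i ω)) ∂μ)
    (hv : ∀ S, v S = ∫ ω, f (mask S (fun i => Y i ω)) ∂μ)
    (hu_int : ∀ S : Finset (Fin n),
      Integrable (fun ω => f (mask S (fun i => X i ω))) μ)
    (hv_int : ∀ S : Finset (Fin n),
      Integrable (fun ω => f (mask S (fun i => Y i ω))) μ) :
    ∀ S : Finset (Fin n), S.card ≤ k →
      (1 / 2) * (1 - ε) ^ (k - 1) * (1 - Δ / ε) * v S ≤ u S ∧
      u S ≤ 2 * η * (1 + a ^ d * k / (ε - Δ)) / ((1 - ε) ^ k * (1 - Δ / ε)) * v S :=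
  sketch_weakly_homogeneous_approx_general μ X hX_meas hX_nonneg hX_indep f hf_meas hf_nonneg
    hf_mono hf_subadd d η hd hη hf_hom k hk ε Δ hε hΔ τ hτ hquant H hH hH_int cst hcst hcstH Xhat
    hXhat a ha Xtil hXtil Y hY u v hu hv hu_int hv_int
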